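/- arXiv:1307.0703 — 4 statements merged into one kernel-verified Lean document; each statement's English description precedes it below -/
import Mathlib

section
/- For all x > 0, the modified Bessel functions satisfy I_1(x)^2 - I_0(x) * I_2(x) > 0. -/
/-- Modified Bessel function of the first kind of order `k`,
`I_k(x) = ∑_{n ≥ 0} (x/2)^(2n+k) / (n! (n+k)!)`. -/
noncomputable def besselI (k : ℕ) (x : ℝ) : ℝ :=
  ∑' n : ℕ, (x / 2) ^ (2 * n + k) / (Nat.factorial n * Nat.factorial (n + k))

/-! The Cauchy product of the two series and Vandermonde's identity give
`I_k(x) I_l(x) = ∑ₙ (x/2)^(2n+k+l) C(2n+k+l, n+l) / (n! (n+k+l)!)`, so that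
`I_1² - I_0 I_2 = ∑ₙ (x/2)^(2n+2) (C(2n+2, n+1) - C(2n+2, n+2)) / (n! (n+2)!)`.
Every coefficient is positive because `C(2n+2, n+1)`, the middle entry of its row of Pascal's
triangle, strictly exceeds its neighbour `C(2n+2, n+2)`. -/

open Finset Nat

theorem Finset.Nat.sum_antidiagonal_add_eq_of_eq_zero {M : Type*} [AddCommMonoid M] {n : ℕ}
    (f : ℕ → ℕ → M) (hf : ∀ a b, n < a → f a b = 0) (k : ℕ) :
    ∑ p ∈ antidiagonal (n + k), f p.1 p.2 = ∑ p ∈ antidiagonal n, f p.1 (p.2 + k) := by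
  induction k generalizing f with
  | zero => rfl
  | succ k ih =>
    rw [← add_assoc, sum_antidiagonal_succ', hf _ _ (by omega), zero_add]
    exact ih (fun a b => f a (b + 1)) fun a b => hf a (b + 1)

theorem Nat.sum_antidiagonal_choose_mul_choose_add (n m k : ℕ) :
    ∑ p ∈ antidiagonal n, n.choose p.1 * m.choose (p.2 + k) = (n + m).choose (n + k) := by
  rw [add_choose_eq, sum_antidiagonal_add_eq_of_eq_zero (fun a b => n.choose a * m.choose b)
    fun a b h => by rw [choose_eq_zero_of_lt h, zero_mul]]

theorem Nat.choose_succ_lt_choose {n k : ℕ} (hk : k ≤ n) (hn : n ≤ 2 * k) :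
    n.choose (k + 1) < n.choose k := by
  refine Nat.lt_of_mul_lt_mul_right (a := k + 1) ?_
  rw [choose_succ_right_eq]
  exact Nat.mul_lt_mul_of_pos_left (by omega) (choose_pos hk)

theorem inv_factorial_mul_factorial_eq_choose_mul_choose_div (i j k l : ℕ) :
    ((i ! * (i + k)! * j ! * (j + l)! : ℝ))⁻¹
      = (i + j).choose i * (i + j + k + l).choose (j + l) / ((i + j)! * (i + j + k + l)!) := by
  have h₁ : ((i + j).choose i * i ! * j ! : ℝ) = (i + j)! := by
    rw [choose_symm_add]
    exact_mod_cast add_choose_mul_factorial_mul_factorial i j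
  have h₂ : ((i + j + k + l).choose (j + l) * (i + k)! * (j + l)! : ℝ) = (i + j + k + l)! := by
    rw [show i + j + k + l = i + k + (j + l) by ring]
    exact_mod_cast add_choose_mul_factorial_mul_factorial (i + k) (j + l)
  have h₃ : ((i + j).choose i : ℝ) ≠ 0 := cast_ne_zero.2 (choose_pos (by omega)).ne'
  have h₄ : ((i + j + k + l).choose (j + l) : ℝ) ≠ 0 := cast_ne_zero.2 (choose_pos (by omega)).ne'
  rw [← h₁, ← h₂]
  field_simp

theorem sum_antidiagonal_inv_factorial_mul (n k l : ℕ) :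
    ∑ p ∈ antidiagonal n, ((p.1 ! * (p.1 + k)! * p.2 ! * (p.2 + l)! : ℝ))⁻¹
      = (2 * n + k + l).choose (n + l) / (n ! * (n + k + l)!) := by
  rw [sum_congr rfl fun p hp => by
      rw [inv_factorial_mul_factorial_eq_choose_mul_choose_div, mem_antidiagonal.1 hp],
    ← sum_div]
  congr 1
  rw [show 2 * n + k + l = n + (n + k + l) by ring,
    ← sum_antidiagonal_choose_mul_choose_add n (n + k + l) l]
  push_cast
  rfl

theorem summable_norm_pow_div_factorial_mul_factorial (k : ℕ) (t : ℝ) :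
    Summable fun n : ℕ => ‖t ^ (2 * n + k) / (n ! * (n + k)! : ℝ)‖ := by
  refine ((Real.summable_pow_div_factorial (|t| ^ 2)).mul_left (|t| ^ k)).of_nonneg_of_le
    (fun _ => norm_nonneg _) fun n => ?_
  calc ‖t ^ (2 * n + k) / (n ! * (n + k)! : ℝ)‖
      = |t| ^ k * ((|t| ^ 2) ^ n / n !) / (n + k)! := by
        rw [norm_div, norm_pow, Real.norm_eq_abs, Real.norm_of_nonneg (by positivity)]
        ring
    _ ≤ |t| ^ k * ((|t| ^ 2) ^ n / n !) :=
        div_le_self (by positivity) (one_le_cast.2 (factorial_pos _))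

theorem hasSum_besselI_mul_besselI (k l : ℕ) (x : ℝ) :
    HasSum (fun n : ℕ => (x / 2) ^ (2 * n + k + l) *
        ((2 * n + k + l).choose (n + l) / (n ! * (n + k + l)!)))
      (besselI k x * besselI l x) := by
  have hk := summable_norm_pow_div_factorial_mul_factorial k (x / 2)
  have hl := summable_norm_pow_div_factorial_mul_factorial l (x / 2)
  have hprod := (summable_norm_sum_mul_antidiagonal_of_summable_norm hk hl).of_norm.hasSum
  rw [← tsum_mul_tsum_eq_tsum_sum_antidiagonal_of_summable_norm hk hl] at hprod
  refine hprod.congr_fun fun n => ?_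
  rw [← sum_antidiagonal_inv_factorial_mul, mul_sum]
  refine sum_congr rfl fun p hp => ?_
  rw [← mem_antidiagonal.1 hp]
  field_simp
  ring

theorem bessel_wronskian_pos :
    ∀ x : ℝ, 0 < x → 0 < besselI 1 x ^ 2 - besselI 0 x * besselI 2 x := by
  intro x hx
  have hsum := (hasSum_besselI_mul_besselI 1 1 x).sub (hasSum_besselI_mul_besselI 0 2 x)
  have hterm : ∀ n : ℕ, 0 < (x / 2) ^ (2 * n + 1 + 1) *
      ((2 * n + 1 + 1).choose (n + 1) / (n ! * (n + 1 + 1)! : ℝ)) - (x / 2) ^ (2 * n + 0 + 2) *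
      ((2 * n + 0 + 2).choose (n + 2) / (n ! * (n + 0 + 2)! : ℝ)) := by
    intro n
    have hdiff : 0 < ((2 * n + 2).choose (n + 1) : ℝ) - (2 * n + 2).choose (n + 2) :=
      sub_pos.2 (cast_lt.2 (choose_succ_lt_choose (by omega) (by omega)))
    rw [add_zero, add_assoc _ 1 1, ← mul_sub, ← sub_div]
    positivity
  rw [sq, ← hsum.tsum_eq]
  exact hsum.summable.tsum_pos (fun n => (hterm n).le) 0 (hterm 0)
end

section
/- There exists a constant C > 0 such that for all x in (0, 1], I_1(x)^2 - I_0(x) * I_2(x) ≥ C * x^2. -/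
private lemma term_nonneg (k : ℕ) {x : ℝ} (hx : 0 ≤ x) (n : ℕ) :
    0 ≤ (x / 2) ^ (2 * n + k) / (Nat.factorial n * Nat.factorial (n + k)) := by
  apply div_nonneg (pow_nonneg (by linarith) _)
  positivity

private lemma term_le (k : ℕ) {x : ℝ} (hx : x ∈ Set.Ioc (0:ℝ) 1) (n : ℕ) :
    (x / 2) ^ (2 * n + k) / (Nat.factorial n * Nat.factorial (n + k))
      ≤ (x / 2) ^ k * (1/4 : ℝ) ^ n := by
  obtain ⟨hx0, hx1⟩ := hx
  have h2 : (x / 2) ^ (2 * n + k) = (x/2)^k * ((x/2)^2)^n := by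
    rw [pow_add, pow_mul]; ring
  have hfac : (1 : ℝ) ≤ (Nat.factorial n * Nat.factorial (n + k) : ℝ) := by
    have h1 := Nat.one_le_iff_ne_zero.mpr (Nat.factorial_ne_zero n)
    have h2 := Nat.one_le_iff_ne_zero.mpr (Nat.factorial_ne_zero (n + k))
    have : (1 : ℕ) ≤ Nat.factorial n * Nat.factorial (n + k) := Nat.one_le_iff_ne_zero.mpr
      (Nat.mul_ne_zero (Nat.factorial_ne_zero n) (Nat.factorial_ne_zero (n+k)))
    exact_mod_cast this
  calc (x / 2) ^ (2 * n + k) / (Nat.factorial n * Nat.factorial (n + k))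
      ≤ (x / 2) ^ (2 * n + k) / 1 :=
        div_le_div_of_nonneg_left (pow_nonneg (by linarith) _) one_pos hfac
    _ = (x/2)^k * ((x/2)^2)^n := by rw [div_one, h2]
    _ ≤ (x/2)^k * (1/4:ℝ)^n := by
        apply mul_le_mul_of_nonneg_left _ (pow_nonneg (by linarith) _)
        apply pow_le_pow_left₀ (by positivity)
        nlinarith

private lemma summable_bessel (k : ℕ) {x : ℝ} (hx : x ∈ Set.Ioc (0:ℝ) 1) :
    Summable (fun n : ℕ => (x / 2) ^ (2 * n + k) / (Nat.factorial n * Nat.factorial (n + k))) := by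
  apply Summable.of_nonneg_of_le (term_nonneg k hx.1.le) (term_le k hx)
  exact (summable_geometric_of_lt_one (by norm_num) (by norm_num)).mul_left _

theorem bessel_wronskian_lower_bound :
    ∃ C : ℝ, 0 < C ∧ ∀ x ∈ Set.Ioc (0 : ℝ) 1,
      C * x ^ 2 ≤ besselI 1 x ^ 2 - besselI 0 x * besselI 2 x := by
  refine ⟨1/36, by norm_num, fun x hx => ?_⟩
  obtain ⟨hx0, hx1⟩ := hx
  have hgeom : ∑' n : ℕ, (1/4 : ℝ) ^ n = 4/3 := by
    rw [tsum_geometric_of_lt_one (by norm_num) (by norm_num)]; norm_num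
  -- I_1 ≥ x/2
  have hI1 : x / 2 ≤ besselI 1 x := by
    have := Summable.le_tsum (summable_bessel 1 ⟨hx0, hx1⟩) 0
      (fun n _ => term_nonneg 1 hx0.le n)
    simpa [besselI] using this.trans_eq' (by norm_num)
  have hI1sq : x^2/4 ≤ besselI 1 x ^ 2 := by
    have h0 : 0 ≤ x/2 := by linarith
    nlinarith
  -- I_0 ≤ 4/3
  have hI0 : besselI 0 x ≤ 4/3 := by
    have hle : besselI 0 x ≤ ∑' n : ℕ, (1/4:ℝ)^n := by
      apply Summable.tsum_le_tsum _ (summable_bessel 0 ⟨hx0, hx1⟩)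
        ((summable_geometric_of_lt_one (by norm_num) (by norm_num)))
      intro n
      have := term_le 0 ⟨hx0, hx1⟩ n
      simpa using this
    linarith [hle.trans_eq hgeom]
  have hI0pos : 0 ≤ besselI 0 x := tsum_nonneg (term_nonneg 0 hx0.le)
  -- I_2 ≤ x^2/6
  have hI2 : besselI 2 x ≤ x^2/6 := by
    have hle : besselI 2 x ≤ ∑' n : ℕ, (x^2/8) * (1/4:ℝ)^n := by
      apply Summable.tsum_le_tsum _ (summable_bessel 2 ⟨hx0, hx1⟩)
        (((summable_geometric_of_lt_one (by norm_num) (by norm_num))).mul_left _)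
      intro n
      have h2 : (x / 2) ^ (2 * n + 2) = (x^2/4) * ((x/2)^2)^n := by
        rw [pow_add, pow_mul]; ring
      have hfac : (2 : ℝ) ≤ (Nat.factorial n * Nat.factorial (n + 2) : ℝ) := by
        have h1 : 2 ≤ Nat.factorial n * Nat.factorial (n + 2) := by
          calc 2 ≤ Nat.factorial (n+2) := Nat.self_le_factorial _ |>.trans' (by omega)
            _ ≤ Nat.factorial n * Nat.factorial (n+2) :=
              Nat.le_mul_of_pos_left _ (Nat.factorial_pos n)
        exact_mod_cast h1
      calc (x / 2) ^ (2 * n + 2) / (Nat.factorial n * Nat.factorial (n + 2))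
          ≤ (x^2/4) * (1/4:ℝ)^n / 2 := by
            apply div_le_div₀ (by positivity) _ two_pos hfac
            rw [h2]
            apply mul_le_mul_of_nonneg_left _ (by positivity)
            apply pow_le_pow_left₀ (by positivity)
            nlinarith
        _ = (x^2/8) * (1/4:ℝ)^n := by ring
    rw [tsum_mul_left, hgeom] at hle
    linarith
  have hI2pos : 0 ≤ besselI 2 x := tsum_nonneg (term_nonneg 2 hx0.le)
  have : besselI 0 x * besselI 2 x ≤ (4/3) * (x^2/6) :=
    mul_le_mul hI0 hI2 hI2pos (by norm_num)
  nlinarith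
end

section
/- There exist constants C, C' > 0 such that for all x in (0, 1], (1/x^2) * |2*I_1(x)*K_1(x) + 2*I_2(x)*K_0(x) - 1| ≤ -C * log x + C'. -/
/-- Modified Bessel function of the second kind of order `k`,
via the integral representation `K_k(x) = ∫_0^∞ e^{-x cosh t} cosh(k t) dt` (valid for `x > 0`). -/
noncomputable def besselK (k : ℕ) (x : ℝ) : ℝ :=
  ∫ t in Set.Ioi (0 : ℝ), Real.exp (-x * Real.cosh t) * Real.cosh (k * t)

open Real Set MeasureTheory Filter
open scoped Nat Topology

lemma exp_neg_le_factorial_div_pow {u : ℝ} (hu : 0 < u) (n : ℕ) : exp (-u) ≤ n ! / u ^ n := by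
  rw [exp_neg, ← inv_div]
  exact inv_anti₀ (by positivity) (pow_div_factorial_le_exp _ hu.le n)

lemma exp_neg_mul_cosh_le {x : ℝ} (hx : 0 < x) (t : ℝ) (n : ℕ) :
    exp (-x * cosh t) ≤ n ! * (2 / x) ^ n * exp (-(n * t)) := by
  have hcosh : x / 2 * exp t ≤ x * cosh t := by
    rw [cosh_eq]; nlinarith [exp_pos (-t)]
  calc exp (-x * cosh t) ≤ exp (-(x / 2 * exp t)) := exp_le_exp.2 (by linarith)
    _ ≤ n ! / (x / 2 * exp t) ^ n := exp_neg_le_factorial_div_pow (by positivity) n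
    _ = n ! * (2 / x) ^ n * exp (-(n * t)) := by
      rw [exp_neg, exp_nat_mul, mul_pow, div_pow, div_pow]
      field_simp

lemma integrableOn_exp_neg_mul_cosh_mul {x : ℝ} (hx : 0 < x) {g : ℝ → ℝ} (hg : Continuous g)
    (hg_le : ∀ t, 0 ≤ t → |g t| ≤ exp t) :
    IntegrableOn (fun t => exp (-x * cosh t) * g t) (Ioi 0) := by
  refine Integrable.mono' ((integrableOn_exp_neg_Ioi 0).const_mul (8 / x ^ 2))
    (by fun_prop : Continuous fun t => exp (-x * cosh t) * g t).aestronglyMeasurable.restrict ?_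
  rw [ae_restrict_iff' measurableSet_Ioi]
  refine .of_forall fun t (ht : 0 < t) => ?_
  have hdecay := exp_neg_mul_cosh_le hx t 2
  rw [norm_mul, norm_of_nonneg (exp_pos _).le, norm_eq_abs]
  calc exp (-x * cosh t) * |g t| ≤ 2 ! * (2 / x) ^ 2 * exp (-(2 * t)) * exp t := by
        gcongr
        · exact_mod_cast hdecay
        · exact hg_le t ht.le
    _ = 8 / x ^ 2 * exp (-t) := by
      rw [mul_assoc, ← exp_add]; norm_num; ring_nf

lemma setIntegral_Ioi_le_of_le_of_le_exp_neg {f : ℝ → ℝ} {T a b : ℝ} (hT : 0 ≤ T)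
    (hf : IntegrableOn f (Ioi 0)) (h_near : ∀ t ∈ Ioc 0 T, f t ≤ a)
    (h_far : ∀ t ∈ Ioi T, f t ≤ b * exp (-t)) :
    ∫ t in Ioi 0, f t ≤ a * T + b * exp (-T) := by
  rw [← Ioc_union_Ioi_eq_Ioi hT, setIntegral_union (Ioc_disjoint_Ioi le_rfl) measurableSet_Ioi
    (hf.mono_set Ioc_subset_Ioi_self) (hf.mono_set (Ioi_subset_Ioi hT))]
  gcongr
  · calc ∫ t in Ioc 0 T, f t ≤ ∫ _ in Ioc 0 T, a :=
          setIntegral_mono_on (hf.mono_set Ioc_subset_Ioi_self)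
            (integrableOn_const measure_Ioc_lt_top.ne) measurableSet_Ioc h_near
      _ = a * T := by simp [hT, mul_comm]
  · calc ∫ t in Ioi T, f t ≤ ∫ t in Ioi T, b * exp (-t) :=
          setIntegral_mono_on (hf.mono_set (Ioi_subset_Ioi hT))
            ((integrableOn_exp_neg_Ioi T).const_mul b) measurableSet_Ioi h_far
      _ = b * exp (-T) := by rw [integral_const_mul, integral_exp_neg_Ioi]

lemma exp_neg_log_two_div {x : ℝ} (hx : 0 < x) : exp (-log (2 / x)) = x / 2 := by
  rw [exp_neg, exp_log (by positivity), inv_div]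

lemma besselK_nonneg (k : ℕ) (x : ℝ) : 0 ≤ besselK k x :=
  setIntegral_nonneg measurableSet_Ioi fun t _ => by positivity

lemma besselK_zero_le {x : ℝ} (hx0 : 0 < x) (hx2 : x ≤ 2) :
    besselK 0 x ≤ log (2 / x) + 1 := by
  have hT : 0 ≤ log (2 / x) := log_nonneg ((one_le_div hx0).2 hx2)
  have hint : IntegrableOn (fun t => exp (-x * cosh t)) (Ioi 0) := by
    simpa using integrableOn_exp_neg_mul_cosh_mul hx0 continuous_const
      (g := fun _ => 1) fun t ht => by simpa using ht
  have hK : besselK 0 x = ∫ t in Ioi 0, exp (-x * cosh t) := by simp [besselK]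
  calc besselK 0 x ≤ 1 * log (2 / x) + 2 / x * exp (-log (2 / x)) := by
        rw [hK]
        refine setIntegral_Ioi_le_of_le_of_le_exp_neg hT hint (fun t _ => ?_) fun t _ => ?_
        · exact exp_le_one_iff.2 (by nlinarith [cosh_pos t])
        · simpa using exp_neg_mul_cosh_le hx0 t 1
    _ = log (2 / x) + 1 := by rw [exp_neg_log_two_div hx0]; field_simp

lemma integrableOn_exp_neg_mul_cosh_mul_sinh {x : ℝ} (hx : 0 < x) :
    IntegrableOn (fun t => exp (-x * cosh t) * sinh t) (Ioi 0) :=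
  integrableOn_exp_neg_mul_cosh_mul hx continuous_sinh fun t ht => by
    rw [abs_of_nonneg (sinh_nonneg_iff.2 ht), sinh_eq]
    linarith [exp_pos (-t), exp_pos t]

lemma integral_exp_neg_mul_cosh_mul_sinh {x : ℝ} (hx : 0 < x) :
    ∫ t in Ioi 0, exp (-x * cosh t) * sinh t = exp (-x) / x := by
  have hderiv : ∀ t ∈ Ioi (0 : ℝ),
      HasDerivAt (fun t => exp (-x * cosh t) * -x⁻¹) (exp (-x * cosh t) * sinh t) t := by
    intro t _
    refine (((hasDerivAt_cosh t).const_mul (-x)).exp.mul_const (-x⁻¹)).congr_deriv ?_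
    field_simp
  have hdecay : Tendsto (fun t => exp (-x * cosh t)) atTop (𝓝 0) := by
    refine squeeze_zero (fun t => (exp_pos _).le) (fun t => exp_neg_mul_cosh_le hx t 1) ?_
    simpa using (tendsto_exp_neg_atTop_nhds_zero).const_mul (2 / x)
  rw [integral_Ioi_of_hasDerivAt_of_tendsto (by fun_prop) hderiv
    (integrableOn_exp_neg_mul_cosh_mul_sinh hx) (by simpa using hdecay.mul_const (-x⁻¹))]
  simp [div_eq_mul_inv]

lemma integrableOn_exp_neg_mul_cosh_mul_exp_neg {x : ℝ} (hx : 0 < x) :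
    IntegrableOn (fun t => exp (-x * cosh t) * exp (-t)) (Ioi 0) :=
  integrableOn_exp_neg_mul_cosh_mul hx (by fun_prop) fun t ht => by
    rw [abs_of_pos (exp_pos _)]; exact exp_le_exp.2 (by linarith)

lemma mul_besselK_one_eq {x : ℝ} (hx : 0 < x) :
    x * besselK 1 x = exp (-x) + x - x * ∫ t in Ioi 0, (1 - exp (-x * cosh t)) * exp (-t) := by
  have hint := integrableOn_exp_neg_mul_cosh_mul_exp_neg hx
  have hK : besselK 1 x = (∫ t in Ioi 0, exp (-x * cosh t) * sinh t)
      + ∫ t in Ioi 0, exp (-x * cosh t) * exp (-t) := by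
    rw [← integral_add (integrableOn_exp_neg_mul_cosh_mul_sinh hx) hint]
    simp only [besselK, Nat.cast_one, one_mul, ← cosh_sub_sinh, ← mul_add, add_sub_cancel]
  have hD : ∫ t in Ioi 0, (1 - exp (-x * cosh t)) * exp (-t)
      = 1 - ∫ t in Ioi 0, exp (-x * cosh t) * exp (-t) := by
    simp only [sub_mul, one_mul]
    rw [integral_sub (integrableOn_exp_neg_Ioi 0) hint, integral_exp_neg_Ioi_zero]
  rw [hK, hD, integral_exp_neg_mul_cosh_mul_sinh hx]
  field_simp
  ring

lemma integral_one_sub_exp_neg_mul_cosh_mul_exp_neg_le {x : ℝ} (hx0 : 0 < x) (hx2 : x ≤ 2) :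
    ∫ t in Ioi 0, (1 - exp (-x * cosh t)) * exp (-t) ≤ x * log (2 / x) + x / 2 := by
  have hint : IntegrableOn (fun t => (1 - exp (-x * cosh t)) * exp (-t)) (Ioi 0) := by
    simp only [sub_mul, one_mul]
    exact (integrableOn_exp_neg_Ioi 0).sub (integrableOn_exp_neg_mul_cosh_mul_exp_neg hx0)
  calc ∫ t in Ioi 0, (1 - exp (-x * cosh t)) * exp (-t)
      ≤ x * log (2 / x) + 1 * exp (-log (2 / x)) := by
        refine setIntegral_Ioi_le_of_le_of_le_exp_neg (log_nonneg ((one_le_div hx0).2 hx2)) hint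
          (fun t ht => ?_) fun t _ => ?_
        · have h_cosh : cosh t * exp (-t) ≤ 1 := by
            have h_inv : exp t * exp (-t) = 1 := by rw [← exp_add, add_neg_cancel, exp_zero]
            have h_le : exp (-t) ≤ 1 := exp_le_one_iff.2 (by linarith [ht.1])
            rw [cosh_eq]; nlinarith [exp_pos (-t)]
          calc (1 - exp (-x * cosh t)) * exp (-t) ≤ x * cosh t * exp (-t) := by
                gcongr; linarith [add_one_le_exp (-x * cosh t)]
            _ ≤ x := by rw [mul_assoc]; exact mul_le_of_le_one_right hx0.le h_cosh
        · rw [one_mul]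
          exact mul_le_of_le_one_left (exp_pos _).le (by linarith [exp_pos (-x * cosh t)])
    _ = x * log (2 / x) + x / 2 := by rw [exp_neg_log_two_div hx0, one_mul]

lemma abs_mul_besselK_one_sub_one_le {x : ℝ} (hx0 : 0 < x) (hx1 : x ≤ 1) :
    |x * besselK 1 x - 1| ≤ x ^ 2 * (log (2 / x) + 3 / 2) := by
  set D := ∫ t in Ioi 0, (1 - exp (-x * cosh t)) * exp (-t)
  have hD_le : x * D ≤ x * (x * log (2 / x) + x / 2) :=
    mul_le_mul_of_nonneg_left
      (integral_one_sub_exp_neg_mul_cosh_mul_exp_neg_le hx0 (by linarith)) hx0.le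
  have hD_nonneg : 0 ≤ x * D := mul_nonneg hx0.le <| setIntegral_nonneg measurableSet_Ioi
    fun t _ => mul_nonneg (by rw [sub_nonneg, exp_le_one_iff]; nlinarith [cosh_pos t])
      (exp_pos _).le
  have hexp := abs_le.1 <| abs_exp_sub_one_sub_id_le (x := -x) (by rwa [abs_neg, abs_of_pos hx0])
  rw [mul_besselK_one_eq hx0, abs_le]
  constructor <;> linarith [hexp.1, hexp.2]

lemma summable_besselI_term (k : ℕ) (x : ℝ) :
    Summable fun n : ℕ => (x / 2) ^ (2 * n + k) / (n ! * (n + k)! : ℝ) := by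
  refine .of_norm_bounded ((Real.summable_pow_div_factorial ((x / 2) ^ 2)).mul_left (|x / 2| ^ k))
    fun n => ?_
  rw [norm_div, norm_pow, Real.norm_eq_abs, pow_add, pow_mul, sq_abs,
    norm_of_nonneg (by positivity), mul_comm, mul_div_assoc]
  gcongr
  exact le_mul_of_one_le_right (by positivity) (by exact_mod_cast (n + k).factorial_pos)

lemma besselI_eq_add_tsum (k : ℕ) (x : ℝ) :
    besselI k x = (x / 2) ^ k / k ! +
      ∑' n : ℕ, (x / 2) ^ (2 * (n + 1) + k) / ((n + 1)! * (n + 1 + k)! : ℝ) := by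
  rw [besselI, (summable_besselI_term k x).tsum_eq_zero_add]
  simp [add_comm]

lemma besselI_tail_le {x : ℝ} (hx0 : 0 ≤ x) (hx1 : x ≤ 1) (k : ℕ) :
    ∑' n : ℕ, (x / 2) ^ (2 * (n + 1) + k) / ((n + 1)! * (n + 1 + k)! : ℝ)
      ≤ 4 / 3 * (x / 2) ^ (k + 2) := by
  have hterm : ∀ n : ℕ, (x / 2) ^ (2 * (n + 1) + k) / ((n + 1)! * (n + 1 + k)! : ℝ)
      ≤ (x / 2) ^ (k + 2) * (1 / 4) ^ n := by
    intro n
    have hden : (1 : ℝ) ≤ (n + 1)! * (n + 1 + k)! := by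
      exact_mod_cast Nat.one_le_iff_ne_zero.2 (by positivity)
    calc (x / 2) ^ (2 * (n + 1) + k) / ((n + 1)! * (n + 1 + k)! : ℝ)
        ≤ (x / 2) ^ (2 * (n + 1) + k) := div_le_self (by positivity) hden
      _ = (x / 2) ^ (k + 2) * ((x / 2) ^ 2) ^ n := by rw [← pow_mul, ← pow_add]; ring_nf
      _ ≤ (x / 2) ^ (k + 2) * (1 / 4) ^ n := by gcongr; nlinarith
  have hgeom : Summable fun n : ℕ => (x / 2) ^ (k + 2) * (1 / 4 : ℝ) ^ n :=
    (summable_geometric_of_lt_one (by norm_num) (by norm_num)).mul_left _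
  calc _ ≤ ∑' n : ℕ, (x / 2) ^ (k + 2) * (1 / 4 : ℝ) ^ n :=
        Summable.tsum_le_tsum hterm (.of_nonneg_of_le (fun n => by positivity) hterm hgeom) hgeom
    _ = 4 / 3 * (x / 2) ^ (k + 2) := by
      rw [tsum_mul_left, tsum_geometric_of_lt_one (by norm_num) (by norm_num)]; ring

lemma besselI_nonneg {x : ℝ} (hx : 0 ≤ x) (k : ℕ) : 0 ≤ besselI k x :=
  tsum_nonneg fun n => by positivity

lemma le_besselI {x : ℝ} (hx : 0 ≤ x) (k : ℕ) : (x / 2) ^ k / k ! ≤ besselI k x := by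
  rw [besselI_eq_add_tsum]
  exact le_add_of_nonneg_right (tsum_nonneg fun n => by positivity)

lemma besselI_le {x : ℝ} (hx0 : 0 ≤ x) (hx1 : x ≤ 1) (k : ℕ) :
    besselI k x ≤ (x / 2) ^ k / k ! + 4 / 3 * (x / 2) ^ (k + 2) := by
  rw [besselI_eq_add_tsum]
  exact add_le_add_right (besselI_tail_le hx0 hx1 k) _

lemma two_mul_besselI_one_sub_self_mem {x : ℝ} (hx0 : 0 ≤ x) (hx1 : x ≤ 1) :
    0 ≤ 2 * besselI 1 x - x ∧ 2 * besselI 1 x - x ≤ x ^ 3 / 3 := by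
  have h_ge := le_besselI hx0 1
  have h_le := besselI_le hx0 hx1 1
  norm_num at h_ge h_le
  constructor <;> linarith

lemma besselI_two_le {x : ℝ} (hx0 : 0 ≤ x) (hx1 : x ≤ 1) : besselI 2 x ≤ x ^ 2 / 4 := by
  have h_le := besselI_le hx0 hx1 2
  norm_num at h_le
  nlinarith [pow_le_one₀ hx0 hx1 (n := 2)]

lemma abs_besselI_mul_besselK_sub_one_le {x : ℝ} (hx0 : 0 < x) (hx1 : x ≤ 1) :
    |2 * besselI 1 x * besselK 1 x + 2 * besselI 2 x * besselK 0 x - 1|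
      ≤ x ^ 2 * (3 * log (2 / x) + 5) := by
  set T := log (2 / x)
  have hT : 0 ≤ T := log_nonneg ((one_le_div hx0).2 (by linarith))
  have hx2 : x ^ 2 ≤ 1 := pow_le_one₀ hx0.le hx1
  have hI1 := two_mul_besselI_one_sub_self_mem hx0.le hx1
  have hK0 := besselK_zero_le hx0 (by linarith)
  have hK1 := abs_mul_besselK_one_sub_one_le hx0 hx1
  have hK1_nonneg := besselK_nonneg 1 x
  have hxK1_le : x * besselK 1 x ≤ T + 5 / 2 := by
    nlinarith [le_abs_self (x * besselK 1 x - 1)]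
  have h_first : |(2 * besselI 1 x - x) * besselK 1 x| ≤ x ^ 2 / 3 * (T + 5 / 2) := by
    rw [abs_of_nonneg (mul_nonneg hI1.1 hK1_nonneg)]
    calc (2 * besselI 1 x - x) * besselK 1 x ≤ x ^ 3 / 3 * besselK 1 x := by gcongr; exact hI1.2
      _ = x ^ 2 / 3 * (x * besselK 1 x) := by ring
      _ ≤ x ^ 2 / 3 * (T + 5 / 2) := by gcongr
  have h_third : |2 * besselI 2 x * besselK 0 x| ≤ x ^ 2 / 2 * (T + 1) := by
    rw [abs_of_nonneg (mul_nonneg (mul_nonneg two_pos.le (besselI_nonneg hx0.le 2))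
      (besselK_nonneg 0 x))]
    calc 2 * besselI 2 x * besselK 0 x ≤ 2 * (x ^ 2 / 4) * (T + 1) := by
          gcongr
          exacts [besselK_nonneg 0 x, besselI_two_le hx0.le hx1]
      _ = x ^ 2 / 2 * (T + 1) := by ring
  calc |2 * besselI 1 x * besselK 1 x + 2 * besselI 2 x * besselK 0 x - 1|
      = |(2 * besselI 1 x - x) * besselK 1 x + (x * besselK 1 x - 1)
          + 2 * besselI 2 x * besselK 0 x| := by congr 1; ring
    _ ≤ |(2 * besselI 1 x - x) * besselK 1 x| + |x * besselK 1 x - 1|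
          + |2 * besselI 2 x * besselK 0 x| := abs_add_three _ _ _
    _ ≤ x ^ 2 / 3 * (T + 5 / 2) + x ^ 2 * (T + 3 / 2) + x ^ 2 / 2 * (T + 1) := by
        gcongr
    _ ≤ x ^ 2 * (3 * T + 5) := by nlinarith

theorem green_fn_log_bound :
    ∃ C : ℝ, 0 < C ∧ ∃ C' : ℝ, 0 < C' ∧ ∀ x ∈ Set.Ioc (0 : ℝ) 1,
      (1 / x ^ 2) * |2 * besselI 1 x * besselK 1 x + 2 * besselI 2 x * besselK 0 x - 1|
        ≤ -C * Real.log x + C' := by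
  refine ⟨3, by norm_num, 8, by norm_num, fun x ⟨hx0, hx1⟩ => ?_⟩
  have hlog : log (2 / x) ≤ 1 - log x := by
    rw [log_div two_ne_zero hx0.ne']
    linarith [log_le_sub_one_of_pos (zero_lt_two' ℝ)]
  rw [one_div_mul_eq_div, div_le_iff₀ (by positivity), mul_comm _ (x ^ 2)]
  exact (abs_besselI_mul_besselK_sub_one_le hx0 hx1).trans
    (mul_le_mul_of_nonneg_left (by linarith) (by positivity))
end

section
/- Let f₁(ε) = (ε·I_1(ε) - 2·I_2(ε)) / (I_1(ε)² - I_0(ε)·I_2(ε)) and f₂(ε) = (-ε·I_2(ε)) / (I_1(ε)² - I_0(ε)·I_2(ε)). Then lim_{ε→0⁺} f₁(ε) = 2 and lim_{ε→0⁺} f₂(ε) = 0. -/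
noncomputable def f₁ (ε : ℝ) : ℝ :=
  (ε * besselI 1 ε - 2 * besselI 2 ε) / (besselI 1 ε ^ 2 - besselI 0 ε * besselI 2 ε)

noncomputable def f₂ (ε : ℝ) : ℝ :=
  (-ε * besselI 2 ε) / (besselI 1 ε ^ 2 - besselI 0 ε * besselI 2 ε)

noncomputable def gB (k : ℕ) (x : ℝ) : ℝ :=
  ∑' n : ℕ, (x / 2) ^ (2 * n) / (Nat.factorial n * Nat.factorial (n + k))

lemma summable_gB (k : ℕ) (x : ℝ) :
    Summable (fun n : ℕ => (x / 2) ^ (2 * n) / (Nat.factorial n * Nat.factorial (n + k))) := by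
  refine Summable.of_nonneg_of_le (fun n => by rw [pow_mul]; positivity) (fun n => ?_)
    (Real.summable_pow_div_factorial ((x / 2) ^ 2))
  rw [pow_mul]
  apply div_le_div_of_nonneg_left (by positivity) (by positivity)
  exact_mod_cast Nat.le_mul_of_pos_right _ (Nat.factorial_pos _)

lemma besselI_eq (k : ℕ) (x : ℝ) : besselI k x = (x / 2) ^ k * gB k x := by
  rw [besselI, gB, ← tsum_mul_left]
  refine tsum_congr fun n => ?_
  rw [pow_add]
  ring

lemma gB_bound (k : ℕ) (x : ℝ) (hx : |x| ≤ 1) :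
    |gB k x - 1 / Nat.factorial k| ≤ x ^ 2 := by
  have hs := summable_gB k x
  have h0 : gB k x = 1 / Nat.factorial k +
      ∑' n : ℕ, (x / 2) ^ (2 * (n + 1)) / (Nat.factorial (n + 1) * Nat.factorial (n + 1 + k)) := by
    rw [gB, Summable.tsum_eq_zero_add hs]
    norm_num
  have hynn : (0:ℝ) ≤ (x / 2) ^ 2 := sq_nonneg _
  have hy : (x / 2) ^ 2 ≤ 1 / 4 := by
    have h1 : x ^ 2 ≤ 1 := by nlinarith [sq_abs x, abs_nonneg x]
    nlinarith
  have hterm : ∀ n : ℕ, (x / 2) ^ (2 * (n + 1)) / (Nat.factorial (n + 1) * Nat.factorial (n + 1 + k))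
      ≤ (x / 2) ^ 2 * (1 / 4 : ℝ) ^ n := by
    intro n
    have hD : (1 : ℝ) ≤ (Nat.factorial (n + 1) * Nat.factorial (n + 1 + k) : ℝ) := by
      exact_mod_cast Nat.one_le_iff_ne_zero.mpr (by positivity)
    rw [pow_mul]
    calc ((x / 2) ^ 2) ^ (n + 1) / (Nat.factorial (n + 1) * Nat.factorial (n + 1 + k))
        ≤ ((x / 2) ^ 2) ^ (n + 1) := div_le_self (pow_nonneg hynn _) hD
      _ = (x / 2) ^ 2 * ((x / 2) ^ 2) ^ n := by rw [pow_succ]; ring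
      _ ≤ (x / 2) ^ 2 * (1 / 4 : ℝ) ^ n := by
          exact mul_le_mul_of_nonneg_left (pow_le_pow_left₀ hynn hy n) hynn
  have hsum2 : Summable (fun n : ℕ => (x / 2) ^ 2 * (1 / 4 : ℝ) ^ n) :=
    (summable_geometric_of_lt_one (by norm_num) (by norm_num)).mul_left _
  have hsum1 : Summable (fun n : ℕ =>
      (x / 2) ^ (2 * (n + 1)) / (Nat.factorial (n + 1) * Nat.factorial (n + 1 + k))) :=
    (summable_nat_add_iff 1).mpr hs
  have htail : ∑' n : ℕ, (x / 2) ^ (2 * (n + 1)) / (Nat.factorial (n + 1) * Nat.factorial (n + 1 + k))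
      ≤ (x / 2) ^ 2 * (4 / 3 : ℝ) := by
    calc _ ≤ ∑' n : ℕ, (x / 2) ^ 2 * (1 / 4 : ℝ) ^ n := Summable.tsum_le_tsum hterm hsum1 hsum2
      _ = (x / 2) ^ 2 * (4 / 3 : ℝ) := by
          rw [tsum_mul_left, tsum_geometric_of_lt_one (by norm_num) (by norm_num)]
          norm_num
  have hnn : 0 ≤ ∑' n : ℕ, (x / 2) ^ (2 * (n + 1)) / (Nat.factorial (n + 1) * Nat.factorial (n + 1 + k)) :=
    tsum_nonneg fun n => by rw [pow_mul]; positivity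
  rw [h0]
  rw [abs_of_nonneg (by linarith)]
  nlinarith [sq_nonneg x]

lemma tendsto_gB (k : ℕ) :
    Filter.Tendsto (gB k) (nhds 0) (nhds (1 / Nat.factorial k)) := by
  have h : Filter.Tendsto (fun x : ℝ => gB k x - 1 / Nat.factorial k) (nhds 0) (nhds 0) := by
    have hb : ∀ᶠ x : ℝ in nhds 0, ‖gB k x - 1 / Nat.factorial k‖ ≤ x ^ 2 := by
      filter_upwards [eventually_abs_sub_lt (0 : ℝ) one_pos] with x hx
      simpa using gB_bound k x (by simpa using hx.le)
    exact squeeze_zero_norm' hb (by simpa using (continuous_pow 2).tendsto (0 : ℝ))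
  have := h.add_const (1 / Nat.factorial k : ℝ)
  simpa using this

theorem f₁_f₂_limits :
    Filter.Tendsto f₁ (nhdsWithin 0 (Set.Ioi 0)) (nhds 2) ∧
    Filter.Tendsto f₂ (nhdsWithin 0 (Set.Ioi 0)) (nhds 0) := by
  have hg : ∀ k : ℕ, Filter.Tendsto (gB k) (nhdsWithin 0 (Set.Ioi 0)) (nhds (1 / Nat.factorial k)) :=
    fun k => (tendsto_gB k).mono_left nhdsWithin_le_nhds
  have hden : Filter.Tendsto (fun x => gB 1 x ^ 2 - gB 0 x * gB 2 x)
      (nhdsWithin 0 (Set.Ioi 0)) (nhds (1 / 2)) := by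
    have h := ((hg 1).pow 2).sub ((hg 0).mul (hg 2))
    have e : ((1:ℝ) / Nat.factorial 1) ^ 2 - (1 / Nat.factorial 0) * (1 / Nat.factorial 2)
        = 1 / 2 := by norm_num [Nat.factorial]
    rwa [e] at h
  constructor
  · have hnum : Filter.Tendsto (fun x => 2 * (gB 1 x - gB 2 x))
        (nhdsWithin 0 (Set.Ioi 0)) (nhds 1) := by
      have h := ((hg 1).sub (hg 2)).const_mul (2 : ℝ)
      have e : (2:ℝ) * (1 / Nat.factorial 1 - 1 / Nat.factorial 2) = 1 := by
        norm_num [Nat.factorial]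
      rwa [e] at h
    have h := hnum.div hden (by norm_num)
    norm_num at h
    refine h.congr' ?_
    filter_upwards [self_mem_nhdsWithin] with x hx
    have hx0 : x ≠ 0 := ne_of_gt hx
    have hc : (x ^ 2 / 4 : ℝ) ≠ 0 := by positivity
    have e : f₁ x = ((x ^ 2 / 4) * (2 * (gB 1 x - gB 2 x))) /
        ((x ^ 2 / 4) * (gB 1 x ^ 2 - gB 0 x * gB 2 x)) := by
      rw [f₁, besselI_eq, besselI_eq, besselI_eq]
      congr 1 <;> ring
    rw [Pi.div_apply, e, mul_div_mul_left _ _ hc]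
  · have hnum : Filter.Tendsto (fun x : ℝ => -x * gB 2 x)
        (nhdsWithin 0 (Set.Ioi 0)) (nhds 0) := by
      have hx : Filter.Tendsto (fun x : ℝ => -x) (nhdsWithin 0 (Set.Ioi 0)) (nhds 0) := by
        simpa using (continuous_neg.tendsto (0:ℝ)).mono_left
          (nhdsWithin_le_nhds (a := (0:ℝ)) (s := Set.Ioi 0))
      simpa using hx.mul (hg 2)
    have h := hnum.div hden (by norm_num)
    norm_num at h
    refine h.congr' ?_
    filter_upwards [self_mem_nhdsWithin] with x hx
    have hx0 : x ≠ 0 := ne_of_gt hx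
    have hc : (x ^ 2 / 4 : ℝ) ≠ 0 := by positivity
    have e : f₂ x = ((x ^ 2 / 4) * (-x * gB 2 x)) /
        ((x ^ 2 / 4) * (gB 1 x ^ 2 - gB 0 x * gB 2 x)) := by
      rw [f₂, besselI_eq, besselI_eq, besselI_eq]
      congr 1 <;> ring
    rw [Pi.div_apply, e, mul_div_mul_left _ _ hc, neg_mul]
end
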